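/- arXiv:1710.05795 — 2 statements merged into one kernel-verified Lean document; each statement's English description precedes it below -/
import Mathlib

section
/- Let (b_1(x), b_2(x), …) and (c_1(x), c_2(x), …) be sequences of polynomials in ℝ[x_1,…,x_m] with nonnegative coefficients. Then the infinite tridiagonal matrix J^{b,c} whose (i,i) diagonal entry is b_i(x) + c_i(x) for i ≥ 1, whose superdiagonal entries are all 1, and whose (i+1,i) subdiagonal entry is b_{i+1}(x)·c_i(x) for i ≥ 1, is x-totally positive. -/
/-! The matrix factors as `J = U L`, with `U` upper bidiagonal (diagonal `bᵢ`, superdiagonal `1`)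
and `L` lower bidiagonal (diagonal `1`, subdiagonal `cᵢ`). Left multiplication by `U` replaces
row `i` by `bᵢ · (row i) + (row i+1)`; expanding a minor by multilinearity in the rows gives a sum
of nonnegative multiples of minors with rows `rᵢ + eᵢ`, `eᵢ ∈ {0, 1}`, and such a row selection is
either strictly increasing or repeats a row. Hence such row operations, and by transposition the
corresponding column operations, preserve total positivity, and `J = U · 1 · L` is built from the
identity matrix, which is totally positive. -/

/-- A multivariable real polynomial is `x`-nonnegative if all of its coefficients
are nonnegative. -/
def PolyNonneg {m : ℕ} (f : MvPolynomial (Fin m) ℝ) : Prop :=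
  ∀ d : Fin m →₀ ℕ, 0 ≤ f.coeff d

/-- An infinite matrix of multivariable real polynomials is `x`-totally positive if
every minor (determinant of a submatrix selected by strictly increasing rows and
columns) has all nonnegative coefficients. -/
def xTP {m : ℕ} (M : ℕ → ℕ → MvPolynomial (Fin m) ℝ) : Prop :=
  ∀ (k : ℕ) (r c : Fin k → ℕ), StrictMono r → StrictMono c →
    PolyNonneg (Matrix.det (Matrix.of fun i j => M (r i) (c j)))

open Matrix Function

section TotallyPositive

variable {R : Type*} [CommRing R]

theorem Matrix.det_of_sum_smul_rows {n ι : Type*} [Fintype n] [DecidableEq n] [Fintype ι]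
    (a : n → ι → R) (w : n → ι → n → R) :
    (of fun i => ∑ t, a i t • w i t).det =
      ∑ e : n → ι, (∏ i, a i (e i)) * (of fun i => w i (e i)).det := by
  calc (of fun i => ∑ t, a i t • w i t).det
      = ∑ e : n → ι, detRowAlternating fun i => a i (e i) • w i (e i) :=
        (detRowAlternating (R := R) (n := n)).toMultilinearMap.map_sum
          fun i t => a i t • w i t
    _ = _ := Finset.sum_congr rfl fun e _ =>
        (detRowAlternating (R := R) (n := n)).toMultilinearMap.map_smul_univ _ _

theorem StrictMono.add_fin_two_of_injective {α : Type*} [PartialOrder α] {r : α → ℕ}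
    (hr : StrictMono r) (e : α → Fin 2) (hinj : Injective fun i => r i + e i) :
    StrictMono fun i => r i + e i := by
  refine Monotone.strictMono_of_injective (fun i j hij => ?_) hinj
  rcases hij.lt_or_eq with hlt | rfl
  · have := hr hlt
    have := (e i).isLt
    omega
  · exact le_rfl

def IsTotallyPositiveIn (S : Subsemiring R) (M : ℕ → ℕ → R) : Prop :=
  ∀ (k : ℕ) (r c : Fin k → ℕ), StrictMono r → StrictMono c →
    (of fun i j => M (r i) (c j)).det ∈ S

namespace IsTotallyPositiveIn

variable {S : Subsemiring R} {M : ℕ → ℕ → R}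

theorem transpose (hM : IsTotallyPositiveIn S M) : IsTotallyPositiveIn S fun i j => M j i := by
  intro k r c hr hc
  rw [← det_transpose]
  exact hM k c r hc hr

theorem one : IsTotallyPositiveIn S fun i j => if i = j then (1 : R) else 0 := by
  intro k r c hr hc
  by_cases hrc : r = c
  · subst hrc
    have : (of fun i j => if r i = r j then (1 : R) else 0) = 1 := by
      ext i j
      simp [one_apply, hr.injective.eq_iff]
    rw [this, det_one]
    exact S.one_mem
  have hne : Set.range r ≠ Set.range c := fun h => hrc ((hr.range_inj hc).1 h)
  by_cases hsub : Set.range r ⊆ Set.range c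
  · obtain ⟨_, ⟨j, rfl⟩, hj⟩ := Set.exists_of_ssubset (hsub.ssubset_of_ne hne)
    rw [det_eq_zero_of_column_eq_zero j fun i =>
      (of_apply _ _ _).trans (if_neg fun h => hj ⟨i, h⟩)]
    exact S.zero_mem
  · obtain ⟨_, ⟨i, rfl⟩, hi⟩ := Set.not_subset.1 hsub
    rw [det_eq_zero_of_row_eq_zero i fun j =>
      (of_apply _ _ _).trans (if_neg fun h => hi ⟨j, h.symm⟩)]
    exact S.zero_mem

theorem bidiagonal_mul (hM : IsTotallyPositiveIn S M) {d u : ℕ → R} (hd : ∀ i, d i ∈ S)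
    (hu : ∀ i, u i ∈ S) : IsTotallyPositiveIn S fun i j => d i * M i j + u i * M (i + 1) j := by
  classical
  intro k r c hr hc
  have hrows : (of fun i j => d (r i) * M (r i) (c j) + u (r i) * M (r i + 1) (c j)) =
      of fun i => ∑ t : Fin 2, ![d (r i), u (r i)] t • fun j => M (r i + t) (c j) := by
    ext i j
    simp [Fin.sum_univ_two]
  rw [hrows, det_of_sum_smul_rows]
  refine S.sum_mem fun e _ => S.mul_mem
    (S.prod_mem fun i _ => (Fin.forall_fin_two (p := (![d (r i), u (r i)] · ∈ S))).2
      ⟨hd (r i), hu (r i)⟩ (e i)) ?_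
  by_cases hinj : Injective fun i => r i + (e i : ℕ)
  · exact hM k _ c (hr.add_fin_two_of_injective e hinj) hc
  · obtain ⟨i, j, hij, hne⟩ := not_injective_iff.1 hinj
    have hrow : (fun x => M (r i + e i) (c x)) = fun x => M (r j + e j) (c x) := by
      rw [show r i + (e i : ℕ) = r j + e j from hij]
    rw [det_zero_of_row_eq hne hrow]
    exact S.zero_mem

theorem mul_bidiagonal (hM : IsTotallyPositiveIn S M) {d l : ℕ → R} (hd : ∀ j, d j ∈ S)
    (hl : ∀ j, l j ∈ S) : IsTotallyPositiveIn S fun i j => M i j * d j + M i (j + 1) * l j := by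
  simpa only [mul_comm] using (hM.transpose.bidiagonal_mul hd hl).transpose

end IsTotallyPositiveIn

end TotallyPositive

def MvPolynomial.nonnegCoeffs (σ : Type*) : Subsemiring (MvPolynomial σ ℝ) where
  carrier := {f | ∀ d, 0 ≤ f.coeff d}
  mul_mem' {f g} hf hg d := by
    classical
    rw [MvPolynomial.coeff_mul]
    exact Finset.sum_nonneg fun x _ => mul_nonneg (hf _) (hg _)
  one_mem' d := by
    classical
    rw [MvPolynomial.coeff_one]
    split_ifs <;> norm_num
  add_mem' hf hg d := by
    rw [MvPolynomial.coeff_add]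
    exact add_nonneg (hf d) (hg d)
  zero_mem' d := by simp

theorem xTP_iff_isTotallyPositiveIn {m : ℕ} {M : ℕ → ℕ → MvPolynomial (Fin m) ℝ} :
    xTP M ↔ IsTotallyPositiveIn (MvPolynomial.nonnegCoeffs (Fin m)) M :=
  Iff.rfl

/-- Lemma 2.3: the tridiagonal matrix with diagonal entries `b i + c i`,
superdiagonal entries `1`, and subdiagonal entries `b (i+1) * c i`
(indices starting at 1) is `x`-totally positive. -/
theorem tridiagonal_bc_xTP {m : ℕ}
    (b c : ℕ → MvPolynomial (Fin m) ℝ)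
    (hb : ∀ i, PolyNonneg (b i)) (hc : ∀ i, PolyNonneg (c i)) :
    xTP (fun i j =>
      if i = j then b (i + 1) + c (i + 1)
      else if j = i + 1 then 1
      else if i = j + 1 then b (i + 1) * c (j + 1)
      else 0) := by
  have hL : IsTotallyPositiveIn (MvPolynomial.nonnegCoeffs (Fin m)) fun i j =>
      (if i = j then 1 else 0) * 1 + (if i = j + 1 then 1 else 0) * c (j + 1) :=
    IsTotallyPositiveIn.one.mul_bidiagonal (fun _ => Subsemiring.one_mem _) fun j => hc (j + 1)
  have hUL := hL.bidiagonal_mul (d := fun i => b (i + 1)) (u := fun _ => 1)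
    (fun i => hb (i + 1)) fun _ => Subsemiring.one_mem _
  rw [xTP_iff_isTotallyPositiveIn]
  convert hUL using 3 with i j
  split_ifs <;> first | omega | (subst_vars; ring)
end

section
/- Let σ = (s_i(x))_{i ≥ 0} and τ = (t_{i+1}(x))_{i ≥ 0} be sequences of polynomials in ℝ[x_1,…,x_m] with nonnegative coefficients, and let r_k(x) = 1 for all k. Let J be the infinite tridiagonal matrix with diagonal entries s_0(x), s_1(x), …, superdiagonal entries all equal to 1, and subdiagonal entries t_1(x), t_2(x), …. Define polynomials m_{n,k}(x) by m_{0,0}(x) = 1, m_{n,k}(x) = 0 unless 0 ≤ k ≤ n, and m_{n+1,k}(x) = m_{n,k−1}(x) + s_k(x)·m_{n,k}(x) + t_{k+1}(x)·m_{n,k+1}(x). If J is x-totally positive, then the sequence (m_{n,0}(x))_{n ≥ 0} is a Stieltjes moment sequence of polynomials, i.e., the Hankel matrix [m_{i+j,0}(x)]_{i,j ≥ 0} is x-totally positive. -/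
/-!
The recurrence says that the rows of `M` are produced by the tridiagonal matrix `J`:
`M (n + 1) = M n * J`. By the Cauchy–Binet formula, a minor of `M` whose row indices are all
positive is a sum of products of a minor of `M` with smaller row indices and a minor of `J`,
so `M` is totally positive by induction (a minor using row `0` reduces to a smaller minor,
since row `0` is `(1, 0, 0, …)`).

With the weights `w k = t 1 * ⋯ * t k`, the matrix `J * diag w` is symmetric, so `J` can be
moved across the form `⟨u, v⟩ = ∑ k, u k * v k * w k`. Starting from
`M (i + j) 0 = ⟨M (i + j), M 0⟩` this gives `M (i + j) 0 = ⟨M i, M j⟩`, i.e. the Hankel matrix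
is `M * diag w * Mᵀ`, and Cauchy–Binet once more shows that its minors have nonnegative
coefficients.
-/

open Finset

theorem Matrix.det_mul_eq_sum_det_submatrix_mul_prod {R n : Type*} [CommRing R] [Fintype n]
    [DecidableEq n] {k : ℕ} (A : Matrix (Fin k) n R) (B : Matrix n (Fin k) R) :
    (A * B).det = ∑ p : Fin k → n, (A.submatrix id p).det * ∏ i, B (p i) i := by
  simp only [det_apply', mul_apply, prod_univ_sum, Fintype.piFinset_univ, mul_sum, sum_mul,
    prod_mul_distrib, submatrix_apply, id]
  rw [sum_comm]
  exact sum_congr rfl fun p _ => sum_congr rfl fun σ _ => by ring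

/-- The Cauchy–Binet formula. -/
theorem Matrix.det_mul_eq_sum_strictMono {R n : Type*} [CommRing R] [Fintype n] [LinearOrder n]
    {k : ℕ} (A : Matrix (Fin k) n R) (B : Matrix n (Fin k) R) :
    (A * B).det = ∑ g : Fin k → n with StrictMono g,
      (A.submatrix id g).det * (B.submatrix g id).det := by
  classical
  rw [det_mul_eq_sum_det_submatrix_mul_prod]
  symm
  calc ∑ g : Fin k → n with StrictMono g, (A.submatrix id g).det * (B.submatrix g id).det
      = ∑ x ∈ ({g | StrictMono g} : Finset (Fin k → n)) ×ˢ (univ : Finset (Equiv.Perm (Fin k))),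
          (A.submatrix id (x.1 ∘ x.2)).det * ∏ i, B (x.1 (x.2 i)) i := by
        rw [sum_product]
        refine sum_congr rfl fun g _ => ?_
        rw [det_apply' (B.submatrix g id), mul_sum]
        refine sum_congr rfl fun τ _ => ?_
        have hτ := det_permute' τ (A.submatrix id g)
        simp only [submatrix_submatrix, Function.comp_id] at hτ
        simp only [hτ, submatrix_apply, id]
        ring
    _ = ∑ p : Fin k → n, (A.submatrix id p).det * ∏ i, B (p i) i := by
        refine sum_of_injOn (fun x => x.1 ∘ x.2) ?_ (fun _ _ => mem_coe.2 (mem_univ _)) ?_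
          fun _ _ => rfl
        · rintro ⟨g, τ⟩ hgτ ⟨g', τ'⟩ hgτ' h
          simp only [coe_product, Set.mem_prod, mem_coe, mem_filter, mem_univ, true_and]
            at hgτ hgτ' h
          have hg : g = g' := (hgτ.1.range_inj hgτ'.1).1 <| by
            rw [← EquivLike.range_comp g τ, ← EquivLike.range_comp g' τ', h]
          subst hg
          simp only [Prod.mk.injEq, true_and]
          exact Equiv.ext fun i => hgτ.1.injective (congrFun h i)
        · intro p _ hp
          -- an injective `p` is the strictly monotone `p ∘ Tuple.sort p` up to a permutation
          have hnotinj : ¬ Function.Injective p := fun hinj => hp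
            ⟨(p ∘ Tuple.sort p, (Tuple.sort p)⁻¹),
              by simp [(Tuple.monotone_sort p).strictMono_of_injective
                (hinj.comp (Tuple.sort p).injective)],
              by ext i; simp⟩
          obtain ⟨i, j, hij, hne⟩ : ∃ i j, p i = p j ∧ i ≠ j := by
            simpa [Function.Injective] using hnotinj
          rw [det_zero_of_column_eq hne fun l => by simp [hij], zero_mul]

theorem Matrix.det_eq_det_submatrix_succ_of_row_zero {R : Type*} [CommRing R] {k : ℕ}
    (A : Matrix (Fin (k + 1)) (Fin (k + 1)) R) (h0 : A 0 0 = 1) (h : ∀ j, j ≠ 0 → A 0 j = 0) :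
    A.det = (A.submatrix Fin.succ Fin.succ).det := by
  rw [det_succ_row_zero, Fin.sum_univ_succ,
    sum_eq_zero fun j _ => by rw [h _ j.succ_ne_zero]; ring]
  simp [h0]

section RowRecurrence

variable {R : Type*} [CommSemiring R] {P M : ℕ → ℕ → R} {w : ℕ → R}

theorem sum_range_mul_eq_of_lt (hMzero : ∀ n k, n < k → M n k = 0) {n N : ℕ} (h : n < N)
    (f : ℕ → R) : ∑ b ∈ range N, M n b * f b = ∑ b ∈ range (n + 1), M n b * f b :=
  (sum_subset (range_subset_range.2 h) fun b _ hb => by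
    rw [hMzero n b (by simpa using hb), zero_mul]).symm

theorem sum_succ_mul_mul_eq_sum_mul_succ_mul (hMzero : ∀ n k, n < k → M n k = 0)
    (hrec : ∀ n c, M (n + 1) c = ∑ b ∈ range (n + 1), M n b * P b c)
    (hsymm : ∀ a b, P a b * w b = P b a * w a) {i j N : ℕ} (hi : i < N) (hj : j < N) :
    ∑ b ∈ range N, M (i + 1) b * M j b * w b = ∑ b ∈ range N, M i b * M (j + 1) b * w b := by
  have hrecN : ∀ n c, n < N → M (n + 1) c = ∑ b ∈ range N, M n b * P b c := fun n c hn => by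
    rw [sum_range_mul_eq_of_lt hMzero hn, hrec]
  calc ∑ b ∈ range N, M (i + 1) b * M j b * w b
      = ∑ a ∈ range N, ∑ b ∈ range N, M i a * M j b * (P a b * w b) := by
        simp_rw [hrecN i _ hi, sum_mul]
        rw [sum_comm]
        exact sum_congr rfl fun a _ => sum_congr rfl fun b _ => by ring
    _ = ∑ a ∈ range N, M i a * M (j + 1) a * w a := by
        simp_rw [hrecN j _ hj, mul_sum, sum_mul]
        exact sum_congr rfl fun a _ => sum_congr rfl fun b _ => by rw [hsymm]; ring

theorem hankel_entry_eq_sum_mul_mul (hM00 : M 0 0 = 1) (hMzero : ∀ n k, n < k → M n k = 0)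
    (hrec : ∀ n c, M (n + 1) c = ∑ b ∈ range (n + 1), M n b * P b c) (hw0 : w 0 = 1)
    (hsymm : ∀ a b, P a b * w b = P b a * w a) {N : ℕ} (i j : ℕ) (h : i + j < N) :
    M (i + j) 0 = ∑ b ∈ range N, M i b * M j b * w b := by
  induction j generalizing i with
  | zero =>
    rw [sum_eq_single 0 (fun b _ hb => by rw [hMzero 0 b (by omega)]; ring)
      fun h0 => absurd (mem_range.2 (by omega)) h0]
    simp [hM00, hw0]
  | succ j ih =>
    rw [← sum_succ_mul_mul_eq_sum_mul_succ_mul hMzero hrec hsymm (by omega) (by omega),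
      ← ih (i + 1) (by omega), Nat.add_right_comm, Nat.add_assoc]

end RowRecurrence

section Tridiagonal

variable {R : Type*} [CommSemiring R] (s t : ℕ → R)

def tridiag (a b : ℕ) : R :=
  if a = b then s a else if b = a + 1 then 1 else if a = b + 1 then t a else 0

def tridiagWeight (k : ℕ) : R := ∏ i ∈ range k, t (i + 1)

theorem tridiag_mul_tridiagWeight_comm (a b : ℕ) :
    tridiag s t a b * tridiagWeight t b = tridiag s t b a * tridiagWeight t a := by
  unfold tridiag tridiagWeight
  split_ifs <;> (try subst_vars) <;> first | omega | simp [prod_range_succ, mul_comm]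

theorem tridiag_eq_zero {a b : ℕ} (h₁ : a ≠ b) (h₂ : b ≠ a + 1) (h₃ : a ≠ b + 1) :
    tridiag s t a b = 0 := by
  rw [tridiag, if_neg h₁, if_neg h₂, if_neg h₃]

variable {s t} {M : ℕ → ℕ → R}

theorem succ_row_eq_sum_mul_tridiag (hMzero : ∀ n k, n < k → M n k = 0)
    (hMrec0 : ∀ n, M (n + 1) 0 = s 0 * M n 0 + t 1 * M n 1)
    (hMrec : ∀ n k, M (n + 1) (k + 1) = M n k + s (k + 1) * M n (k + 1) + t (k + 2) * M n (k + 2))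
    (n c : ℕ) : M (n + 1) c = ∑ b ∈ range (n + 1), M n b * tridiag s t b c := by
  rw [← sum_range_mul_eq_of_lt hMzero (show n < n + c + 3 by omega)]
  rcases c with _ | c
  · have hsub : {0, 1} ⊆ range (n + 0 + 3) := by
      intro b; simp only [mem_insert, mem_singleton, mem_range]; omega
    rw [hMrec0, ← sum_subset hsub fun b _ hb => ?_]
    · simp [tridiag, mul_comm]
    · simp only [mem_insert, mem_singleton] at hb
      rw [tridiag_eq_zero s t (by omega) (by omega) (by omega), mul_zero]
  · have hsub : {c, c + 1, c + 2} ⊆ range (n + (c + 1) + 3) := by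
      intro b; simp only [mem_insert, mem_singleton, mem_range]; omega
    rw [hMrec, ← sum_subset hsub fun b _ hb => ?_]
    · simp [tridiag, mul_comm, add_assoc]
    · simp only [mem_insert, mem_singleton] at hb
      rw [tridiag_eq_zero s t (by omega) (by omega) (by omega), mul_zero]

end Tridiagonal

section TotalPositivity

variable {m : ℕ}

def nonnegSubsemiring (m : ℕ) : Subsemiring (MvPolynomial (Fin m) ℝ) where
  carrier := {f | PolyNonneg f}
  zero_mem' d := by simp
  one_mem' d := by rw [MvPolynomial.coeff_one]; positivity
  add_mem' hf hg d := by rw [MvPolynomial.coeff_add]; exact add_nonneg (hf d) (hg d)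
  mul_mem' hf hg d := by
    rw [MvPolynomial.coeff_mul]
    exact sum_nonneg fun x _ => mul_nonneg (hf x.1) (hg x.2)

theorem polyNonneg_det_of_eq_sum_mul {k : ℕ}
    (X : Matrix (Fin k) (Fin k) (MvPolynomial (Fin m) ℝ)) (N : ℕ)
    (A : Fin k → ℕ → MvPolynomial (Fin m) ℝ) (B : ℕ → Fin k → MvPolynomial (Fin m) ℝ)
    (hX : ∀ i j, X i j = ∑ b ∈ range N, A i b * B b j)
    (hA : ∀ g : Fin k → ℕ, StrictMono g → PolyNonneg (Matrix.of fun i j => A i (g j)).det)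
    (hB : ∀ g : Fin k → ℕ, StrictMono g → PolyNonneg (Matrix.of fun i j => B (g i) j).det) :
    PolyNonneg X.det := by
  have hXmul :
      X = Matrix.of (fun i (b : Fin N) => A i b) * Matrix.of fun (b : Fin N) j => B b j := by
    ext i j
    rw [hX, Matrix.mul_apply, ← Fin.sum_univ_eq_sum_range (fun b => A i b * B b j)]
    rfl
  rw [hXmul, Matrix.det_mul_eq_sum_strictMono]
  refine (nonnegSubsemiring m).sum_mem fun g hg => (nonnegSubsemiring m).mul_mem ?_ ?_
  · exact hA _ (Fin.val_strictMono.comp (mem_filter.1 hg).2)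
  · exact hB _ (Fin.val_strictMono.comp (mem_filter.1 hg).2)

theorem xTP_of_succ_row_eq_sum {P M : ℕ → ℕ → MvPolynomial (Fin m) ℝ} (hM00 : M 0 0 = 1)
    (hMzero : ∀ n k, n < k → M n k = 0)
    (hrec : ∀ n c, M (n + 1) c = ∑ b ∈ range (n + 1), M n b * P b c) (hP : xTP P) : xTP M := by
  suffices H : ∀ d k (r c : Fin k → ℕ), k + ∑ i, r i = d → StrictMono r → StrictMono c →
      PolyNonneg (Matrix.of fun i j => M (r i) (c j)).det from
    fun k r c => H _ k r c rfl
  intro d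
  induction d using Nat.strong_induction_on with
  | _ d IH =>
    rintro (_ | k) r c rfl hr hc
    · rw [Matrix.det_isEmpty]; exact (nonnegSubsemiring m).one_mem
    rcases Nat.eq_zero_or_pos (r 0) with hr0 | hr0
    · have hrow : ∀ j, M (r 0) (c j) = if c j = 0 then 1 else 0 := fun j => by
        split_ifs with hcj
        · rw [hr0, hcj, hM00]
        · exact hMzero _ _ (by omega)
      rcases Nat.eq_zero_or_pos (c 0) with hc0 | hc0
      · rw [Matrix.det_eq_det_submatrix_succ_of_row_zero _ (by simp [hr0, hc0, hM00]) fun j hj => by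
          have := hc (Fin.pos_iff_ne_zero.2 hj); rw [Matrix.of_apply, hrow, if_neg (by omega)]]
        refine IH _ ?_ k (r ∘ Fin.succ) (c ∘ Fin.succ) rfl (hr.comp Fin.strictMono_succ)
          (hc.comp Fin.strictMono_succ)
        simp [Fin.sum_univ_succ, hr0]
      · rw [Matrix.det_eq_zero_of_row_eq_zero 0 fun j => by
          simpa [hrow] using (hc0.trans_le (hc.monotone (Fin.zero_le j))).ne']
        exact (nonnegSubsemiring m).zero_mem
    · -- all row indices are positive, so the minor factors through the production matrix `P`
      have hrpos : ∀ i, 0 < r i := fun i => hr0.trans_le (hr.monotone (Fin.zero_le i))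
      refine polyNonneg_det_of_eq_sum_mul _ (∑ i, r i) (fun i b => M (r i - 1) b)
        (fun b j => P b (c j)) (fun i j => ?_)
        (fun g hg => IH _ ?_ _ (fun i => r i - 1) g rfl ?_ hg) (fun g hg => hP _ g c hg hc)
      · rw [sum_range_mul_eq_of_lt hMzero, ← hrec, Nat.sub_add_cancel (hrpos i)]
        · rfl
        · have := single_le_sum (fun i _ => Nat.zero_le (r i)) (mem_univ i)
          have := hrpos i
          omega
      · have := sum_lt_sum (s := univ) (fun i _ => Nat.sub_le (r i) 1) ⟨0, mem_univ _, by omega⟩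
        omega
      · intro a b hab
        show r a - 1 < r b - 1
        have := hr hab
        have := hrpos a
        omega

end TotalPositivity

theorem stieltjes_of_coefficient_matrix_xTP_general {m : ℕ}
    (s t : ℕ → MvPolynomial (Fin m) ℝ)
    (ht : ∀ i, PolyNonneg (t i))
    (M : ℕ → ℕ → MvPolynomial (Fin m) ℝ)
    (hM00 : M 0 0 = 1)
    (hMzero : ∀ n k, n < k → M n k = 0)
    (hMrec0 : ∀ n, M (n + 1) 0 = s 0 * M n 0 + t 1 * M n 1)
    (hMrec : ∀ n k, M (n + 1) (k + 1) =
      M n k + s (k + 1) * M n (k + 1) + t (k + 2) * M n (k + 2))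
    (hJ : xTP (fun a b =>
      if a = b then s a
      else if b = a + 1 then 1
      else if a = b + 1 then t a
      else 0)) :
    xTP (fun i j => M (i + j) 0) := by
  have hrec := succ_row_eq_sum_mul_tridiag hMzero hMrec0 hMrec
  have hM : xTP M := xTP_of_succ_row_eq_sum hM00 hMzero hrec hJ
  intro k r c hr hc
  refine polyNonneg_det_of_eq_sum_mul _ (∑ i, r i + ∑ j, c j + 1) (fun i b => M (r i) b)
    (fun b j => tridiagWeight t b * M (c j) b) (fun i j => ?_) (fun g hg => hM _ r g hr hg)
    (fun g hg => ?_)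
  · have hN : r i + c j < ∑ i, r i + ∑ j, c j + 1 := by
      have := single_le_sum (fun i _ => Nat.zero_le (r i)) (mem_univ i)
      have := single_le_sum (fun j _ => Nat.zero_le (c j)) (mem_univ j)
      omega
    show M (r i + c j) 0 = _
    rw [hankel_entry_eq_sum_mul_mul hM00 hMzero hrec (by simp [tridiagWeight])
      (tridiag_mul_tridiagWeight_comm s t) (r i) (c j) hN]
    exact sum_congr rfl fun b _ => by ring
  · have h := Matrix.det_mul_column (fun i => tridiagWeight t (g i))
      (Matrix.of fun j i => M (c j) (g i)).transpose
    simp only [Matrix.transpose_apply, Matrix.of_apply, Matrix.det_transpose] at h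
    rw [h]
    exact (nonnegSubsemiring m).mul_mem
      ((nonnegSubsemiring m).prod_mem fun i _ => (nonnegSubsemiring m).prod_mem fun l _ => ht _)
      (hM _ c g hc hg)

/-- Theorem 2.4: if the tridiagonal coefficient matrix `J` (with superdiagonal
entries all equal to `1`) is `x`-totally positive, then the sequence
`(m_{n,0}(x))` of multivariable Catalan-like polynomials is a Stieltjes moment
sequence of polynomials, i.e., its Hankel matrix is `x`-totally positive. -/
theorem stieltjes_of_coefficient_matrix_xTP {m : ℕ}
    (s t : ℕ → MvPolynomial (Fin m) ℝ)
    (hs : ∀ i, PolyNonneg (s i)) (ht : ∀ i, PolyNonneg (t i))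
    (M : ℕ → ℕ → MvPolynomial (Fin m) ℝ)
    (hM00 : M 0 0 = 1)
    (hMzero : ∀ n k, n < k → M n k = 0)
    (hMrec0 : ∀ n, M (n + 1) 0 = s 0 * M n 0 + t 1 * M n 1)
    (hMrec : ∀ n k, M (n + 1) (k + 1) =
      M n k + s (k + 1) * M n (k + 1) + t (k + 2) * M n (k + 2))
    (hJ : xTP (fun a b =>
      if a = b then s a
      else if b = a + 1 then 1
      else if a = b + 1 then t a
      else 0)) :
    xTP (fun i j => M (i + j) 0) :=
  stieltjes_of_coefficient_matrix_xTP_general s t ht M hM00 hMzero hMrec0 hMrec hJ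
end
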